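/- Let (Y₁, Y₂) be a pair of random variables taking values in measurable spaces (𝒴₁, μ₁) and (𝒴₂, μ₂) with σ-finite measures, and suppose their joint law has a density of the form π(y₁, y₂) = a(y₁) · b(y₂) · c(T₁(y₁), T₂(y₂)) with respect to the product measure μ₁ × μ₂, where a, b, c are nonnegative measurable functions and T₁, T₂ are measurable statistics. Then Y₁ and Y₂ are conditionally independent given the pair (T₁(Y₁), T₂(Y₂)). -/

import Mathlib

/-!
Under the factored density, given `T₁ Y₁` the variable `Y₁` is independent of `Y₂`: integrating
`u(y₁) W(T₁ y₁, y₂)` against `a(y₁) b(y₂) c(T₁ y₁, T₂ y₂)`, the inner `y₂`-integral depends on `y₁`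
only through `T₁ y₁`, so `𝔼[u(Y₁) | T₁ Y₁, Y₂] = 𝔼[u(Y₁) | T₁ Y₁]`. Using this once on each side
gives `𝔼[u(Y₁) v(Y₂) | T₁ Y₁, T₂ Y₂] = 𝔼[u(Y₁) | T₁ Y₁] 𝔼[v(Y₂) | T₂ Y₂]` for nonnegative `u, v`,
with the conditional expectations realised as Radon–Nikodym derivatives of pushforward measures.
Bounded `φ, ψ` reduce to this case by adding constants, which both sides absorb in the same way.
-/

open MeasureTheory
open scoped ENNReal

lemma lintegral_mul_div_cancel {α : Type*} [MeasurableSpace α] {ρ : Measure α} {h K : α → ℝ≥0∞}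
    (hh : Measurable h) (hfin : ∫⁻ x, h x ∂ρ ≠ ∞) (hK : ∀ x, h x = 0 → K x = 0) :
    ∫⁻ x, h x * (K x / h x) ∂ρ = ∫⁻ x, K x ∂ρ :=
  lintegral_congr_ae <| (ae_lt_top hh hfin).mono fun x hx => by
    by_cases h0 : h x = 0
    · simp [h0, hK x h0]
    · exact ENNReal.mul_div_cancel h0 hx.ne

lemma map_swap_withDensity_prod {α β : Type*} [MeasurableSpace α] [MeasurableSpace β]
    {μ : Measure α} {ν : Measure β} [SFinite μ] [SFinite ν] {g : α × β → ℝ≥0∞}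
    (hg : Measurable g) :
    ((μ.prod ν).withDensity g).map Prod.swap = (ν.prod μ).withDensity (g ∘ Prod.swap) :=
  Measure.ext_of_lintegral _ fun f hf => calc
    ∫⁻ q, f q ∂((μ.prod ν).withDensity g).map Prod.swap = ∫⁻ p, g p * f p.swap ∂μ.prod ν := by
      rw [lintegral_map hf measurable_swap]
      exact lintegral_withDensity_eq_lintegral_mul _ hg (hf.comp measurable_swap)
    _ = ∫⁻ q, g q.swap * f q ∂ν.prod μ := (lintegral_prod_swap _).symm
    _ = _ := (lintegral_withDensity_eq_lintegral_mul _ (hg.comp measurable_swap) hf).symm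

lemma condExp_mul_ae_eq_of_add_const {Ω : Type*} {m m₀ : MeasurableSpace Ω} {μ : Measure Ω}
    [IsFiniteMeasure μ] (hm : m ≤ m₀) {f g : Ω → ℝ} (hf : MemLp f ∞ μ) (hg : MemLp g ∞ μ)
    (c d : ℝ)
    (h : μ[fun ω => (f ω + c) * (g ω + d) | m]
      =ᵐ[μ] fun ω => μ[fun ω => f ω + c | m] ω * μ[fun ω => g ω + d | m] ω) :
    μ[fun ω => f ω * g ω | m] =ᵐ[μ] fun ω => μ[f | m] ω * μ[g | m] ω := by
  have hfi : Integrable f μ := hf.integrable le_top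
  have hgi : Integrable g μ := hg.integrable le_top
  have hfgi : Integrable (f * g) μ := (hg.mul hf).integrable le_top
  have hf_c : μ[fun ω => f ω + c | m] =ᵐ[μ] fun ω => μ[f | m] ω + c := by
    have := condExp_add hfi (integrable_const c) m
    rwa [condExp_const hm] at this
  have hg_d : μ[fun ω => g ω + d | m] =ᵐ[μ] fun ω => μ[g | m] ω + d := by
    have := condExp_add hgi (integrable_const d) m
    rwa [condExp_const hm] at this
  have hexpand : (fun ω => (f ω + c) * (g ω + d)) = f * g + d • f + c • g + fun _ => c * d := by
    funext ω; simp only [Pi.add_apply, Pi.mul_apply, Pi.smul_apply, smul_eq_mul]; ring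
  have hprod : μ[fun ω => (f ω + c) * (g ω + d) | m]
      =ᵐ[μ] fun ω => μ[f * g | m] ω + d * μ[f | m] ω + c * μ[g | m] ω + c * d := by
    rw [hexpand]
    filter_upwards
      [condExp_add ((hfgi.add (hfi.smul d)).add (hgi.smul c)) (integrable_const (c * d)) m,
      condExp_add (hfgi.add (hfi.smul d)) (hgi.smul c) m, condExp_add hfgi (hfi.smul d) m,
      condExp_smul d f m, condExp_smul c g m] with ω h₁ h₂ h₃ h₄ h₅
    simp only [Pi.add_apply, Pi.smul_apply, smul_eq_mul, condExp_const hm] at h₁ h₂ h₃ h₄ h₅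
    rw [h₁, h₂, h₃, h₄, h₅]
  filter_upwards [h, hf_c, hg_d, hprod] with ω h h₁ h₂ h₃
  rw [h₁, h₂, h₃] at h
  linear_combination h

section CondExpFun

variable {Ω 𝒳 : Type*} [MeasurableSpace Ω] [MeasurableSpace 𝒳]

/-- `F ∘ X` is a version of `𝔼[f | X]`, tested against nonnegative functions of `X`. -/
def IsCondExpFun (μ : Measure Ω) (X : Ω → 𝒳) (f : Ω → ℝ≥0∞) (F : 𝒳 → ℝ≥0∞) : Prop :=
  ∀ k : 𝒳 → ℝ≥0∞, Measurable k → ∫⁻ ω, f ω * k (X ω) ∂μ = ∫⁻ ω, F (X ω) * k (X ω) ∂μ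

lemma IsCondExpFun.lintegral_eq {μ : Measure Ω} {X : Ω → 𝒳} {f : Ω → ℝ≥0∞} {F : 𝒳 → ℝ≥0∞}
    (h : IsCondExpFun μ X f F) : ∫⁻ ω, f ω ∂μ = ∫⁻ ω, F (X ω) ∂μ := by
  simpa using h 1 measurable_const

lemma IsCondExpFun.setLIntegral_eq {μ : Measure Ω} {X : Ω → 𝒳} {f : Ω → ℝ≥0∞} {F : 𝒳 → ℝ≥0∞}
    (h : IsCondExpFun μ X f F) (hX : Measurable X) {E : Set 𝒳} (hE : MeasurableSet E) :
    ∫⁻ ω in X ⁻¹' E, f ω ∂μ = ∫⁻ ω in X ⁻¹' E, F (X ω) ∂μ := by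
  have key := h (E.indicator 1) (measurable_one.indicator hE)
  rw [← lintegral_indicator (hX hE), ← lintegral_indicator (hX hE)]
  convert key using 2 <;> funext ω <;> by_cases hω : X ω ∈ E <;> simp [hω]

lemma exists_isCondExpFun (μ : Measure Ω) [IsFiniteMeasure μ] {X : Ω → 𝒳} (hX : Measurable X)
    {f : Ω → ℝ≥0∞} (hf : Measurable f) : ∃ F, Measurable F ∧ IsCondExpFun μ X f F := by
  refine ⟨((μ.withDensity f).map X).rnDeriv (μ.map X), Measure.measurable_rnDeriv _ _,
    fun k hk => ?_⟩
  have hac : (μ.withDensity f).map X ≪ μ.map X :=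
    (withDensity_absolutelyContinuous μ f).map hX
  calc ∫⁻ ω, f ω * k (X ω) ∂μ = ∫⁻ x, k x ∂(μ.withDensity f).map X := by
        rw [lintegral_map hk hX]
        exact (lintegral_withDensity_eq_lintegral_mul _ hf (hk.comp hX)).symm
    _ = ∫⁻ x, k x ∂(μ.map X).withDensity (((μ.withDensity f).map X).rnDeriv (μ.map X)) := by
        rw [Measure.withDensity_rnDeriv_eq _ _ hac]
    _ = _ := by
        rw [lintegral_withDensity_eq_lintegral_mul _ (Measure.measurable_rnDeriv _ _) hk,
          lintegral_map ((Measure.measurable_rnDeriv _ _).mul hk) hX]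
        rfl

lemma condExp_ae_eq_of_isCondExpFun {μ : Measure Ω} [IsFiniteMeasure μ] {X : Ω → 𝒳}
    (hX : Measurable X) {f : Ω → ℝ} (hf0 : 0 ≤ f) (hf : Integrable f μ) {F : 𝒳 → ℝ≥0∞}
    (hF : Measurable F) (h : IsCondExpFun μ X (fun ω => ENNReal.ofReal (f ω)) F) :
    μ[f | MeasurableSpace.comap X inferInstance] =ᵐ[μ] fun ω => (F (X ω)).toReal := by
  have hFX : Measurable fun ω => F (X ω) := hF.comp hX
  have hfin : ∫⁻ ω, F (X ω) ∂μ ≠ ∞ := h.lintegral_eq ▸ hf.lintegral_lt_top.ne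
  have hlt : ∀ᵐ ω ∂μ, F (X ω) < ∞ := ae_lt_top hFX hfin
  refine (ae_eq_condExp_of_forall_setIntegral_eq hX.comap_le hf
    (fun _ _ _ => (integrable_toReal_of_lintegral_ne_top hFX.aemeasurable hfin).integrableOn)
    ?_ ?_).symm
  · rintro _ ⟨E, hE, rfl⟩ _
    rw [integral_toReal hFX.aemeasurable.restrict (ae_restrict_of_ae hlt),
      integral_eq_lintegral_of_nonneg_ae (ae_of_all _ hf0) hf.aestronglyMeasurable.restrict,
      h.setLIntegral_eq hX hE]
  · exact (hF.ennreal_toReal.comp (comap_measurable X)).aestronglyMeasurable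

end CondExpFun

section Markov

variable {Ω 𝒴 𝒵 𝒮 : Type*} [MeasurableSpace Ω] [MeasurableSpace 𝒴] [MeasurableSpace 𝒵]
  [MeasurableSpace 𝒮] {μ : Measure Ω} {μ₁ : Measure 𝒴} {ν : Measure 𝒵} [SFinite ν]
  {Y : Ω → 𝒴} {Z : Ω → 𝒵} {T : 𝒴 → 𝒮} {a : 𝒴 → ℝ≥0∞} {B : 𝒮 × 𝒵 → ℝ≥0∞}

/-- When `(Y, Z)` has density `a y * B (T y, z)`, this is `𝔼[W (s, Z) | T Y = s]`. -/
noncomputable def weightedAvg (ν : Measure 𝒵) (B W : 𝒮 × 𝒵 → ℝ≥0∞) (s : 𝒮) : ℝ≥0∞ :=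
  (∫⁻ z, B (s, z) * W (s, z) ∂ν) / ∫⁻ z, B (s, z) ∂ν

lemma measurable_weightedAvg {W : 𝒮 × 𝒵 → ℝ≥0∞} (hB : Measurable B) (hW : Measurable W) :
    Measurable (weightedAvg ν B W) :=
  (hB.mul hW).lintegral_prod_right'.div hB.lintegral_prod_right'

lemma lintegral_comp_eq_of_map_eq_withDensity (hY : Measurable Y) (hZ : Measurable Z)
    (hT : Measurable T) (ha : Measurable a) (hB : Measurable B)
    (hdens : μ.map (fun ω => (Y ω, Z ω)) = (μ₁.prod ν).withDensity fun p => a p.1 * B (T p.1, p.2))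
    {v : 𝒴 → ℝ≥0∞} (hv : Measurable v) {W : 𝒮 × 𝒵 → ℝ≥0∞} (hW : Measurable W) :
    ∫⁻ ω, v (Y ω) * W (T (Y ω), Z ω) ∂μ
      = ∫⁻ s, ∫⁻ z, B (s, z) * W (s, z) ∂ν ∂(μ₁.withDensity (a * v)).map T := by
  have hK : Measurable fun s => ∫⁻ z, B (s, z) * W (s, z) ∂ν := (hB.mul hW).lintegral_prod_right'
  have hvW : Measurable fun p : 𝒴 × 𝒵 => v p.1 * W (T p.1, p.2) := by fun_prop
  calc ∫⁻ ω, v (Y ω) * W (T (Y ω), Z ω) ∂μ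
      = ∫⁻ p, v p.1 * W (T p.1, p.2) ∂μ.map (fun ω => (Y ω, Z ω)) :=
        (lintegral_map hvW (hY.prodMk hZ)).symm
    _ = ∫⁻ p, a p.1 * B (T p.1, p.2) * (v p.1 * W (T p.1, p.2)) ∂μ₁.prod ν := by
        rw [hdens, lintegral_withDensity_eq_lintegral_mul _ (by fun_prop) (by fun_prop)]; rfl
    _ = ∫⁻ y, ∫⁻ z, (a y * v y) * (B (T y, z) * W (T y, z)) ∂ν ∂μ₁ := by
        rw [lintegral_prod _ (by fun_prop)]
        refine lintegral_congr fun y => lintegral_congr fun z => ?_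
        ring
    _ = ∫⁻ y, (a * v) y * (fun s => ∫⁻ z, B (s, z) * W (s, z) ∂ν) (T y) ∂μ₁ :=
        lintegral_congr fun y => lintegral_const_mul _ (by fun_prop)
    _ = _ := by
        rw [lintegral_map hK hT]
        exact (lintegral_withDensity_eq_lintegral_mul _ (ha.mul hv) (hK.comp hT)).symm

lemma lintegral_comp_eq_lintegral_weightedAvg (hY : Measurable Y) (hZ : Measurable Z)
    (hT : Measurable T) (ha : Measurable a) (hB : Measurable B)
    (hdens : μ.map (fun ω => (Y ω, Z ω)) = (μ₁.prod ν).withDensity fun p => a p.1 * B (T p.1, p.2))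
    {v : 𝒴 → ℝ≥0∞} (hv : Measurable v) (hvfin : ∫⁻ ω, v (Y ω) ∂μ ≠ ∞)
    {W : 𝒮 × 𝒵 → ℝ≥0∞} (hW : Measurable W) :
    ∫⁻ ω, v (Y ω) * W (T (Y ω), Z ω) ∂μ = ∫⁻ ω, v (Y ω) * weightedAvg ν B W (T (Y ω)) ∂μ := by
  have formula {W : 𝒮 × 𝒵 → ℝ≥0∞} (hW : Measurable W) :=
    lintegral_comp_eq_of_map_eq_withDensity hY hZ hT ha hB hdens hv hW
  have hB_s (s : 𝒮) : Measurable fun z => B (s, z) := hB.comp measurable_prodMk_left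
  have hfin : ∫⁻ s, ∫⁻ z, B (s, z) ∂ν ∂(μ₁.withDensity (a * v)).map T ≠ ∞ := by
    have := formula measurable_one
    simp only [Pi.one_apply, mul_one] at this
    rwa [← this]
  have hK (s : 𝒮) (hs : ∫⁻ z, B (s, z) ∂ν = 0) : ∫⁻ z, B (s, z) * W (s, z) ∂ν = 0 := by
    rw [lintegral_eq_zero_iff (hB_s s)] at hs
    exact (lintegral_congr_ae (hs.mono fun z hz => by simp_all)).trans lintegral_zero
  calc ∫⁻ ω, v (Y ω) * W (T (Y ω), Z ω) ∂μ
      = ∫⁻ s, ∫⁻ z, B (s, z) * W (s, z) ∂ν ∂(μ₁.withDensity (a * v)).map T := formula hW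
    _ = ∫⁻ s, (∫⁻ z, B (s, z) ∂ν) * weightedAvg ν B W s ∂(μ₁.withDensity (a * v)).map T :=
        (lintegral_mul_div_cancel hB.lintegral_prod_right' hfin hK).symm
    _ = ∫⁻ s, ∫⁻ z, B (s, z) * weightedAvg ν B W s ∂ν ∂(μ₁.withDensity (a * v)).map T := by
        simp only [lintegral_mul_const _ (hB_s _)]
    _ = _ := (formula ((measurable_weightedAvg hB hW).comp measurable_fst)).symm

lemma IsCondExpFun.prodMk_of_map_eq_withDensity (hY : Measurable Y) (hZ : Measurable Z)
    (hT : Measurable T) (ha : Measurable a) (hB : Measurable B)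
    (hdens : μ.map (fun ω => (Y ω, Z ω)) = (μ₁.prod ν).withDensity fun p => a p.1 * B (T p.1, p.2))
    {u : 𝒴 → ℝ≥0∞} (hu : Measurable u) (hufin : ∫⁻ ω, u (Y ω) ∂μ ≠ ∞) {F : 𝒮 → ℝ≥0∞}
    (hF : Measurable F) (h : IsCondExpFun μ (fun ω => T (Y ω)) (fun ω => u (Y ω)) F) :
    IsCondExpFun μ (fun ω => (T (Y ω), Z ω)) (fun ω => u (Y ω)) fun p => F p.1 := by
  intro W hW
  have hFfin : ∫⁻ ω, F (T (Y ω)) ∂μ ≠ ∞ := h.lintegral_eq ▸ hufin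
  calc ∫⁻ ω, u (Y ω) * W (T (Y ω), Z ω) ∂μ
      = ∫⁻ ω, u (Y ω) * weightedAvg ν B W (T (Y ω)) ∂μ :=
        lintegral_comp_eq_lintegral_weightedAvg hY hZ hT ha hB hdens hu hufin hW
    _ = ∫⁻ ω, F (T (Y ω)) * weightedAvg ν B W (T (Y ω)) ∂μ := h _ (measurable_weightedAvg hB hW)
    _ = ∫⁻ ω, F (T (Y ω)) * W (T (Y ω), Z ω) ∂μ :=
        (lintegral_comp_eq_lintegral_weightedAvg hY hZ hT ha hB hdens (v := F ∘ T) (hF.comp hT)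
          hFfin hW).symm

end Markov

section FactoredDensity

variable {Ω 𝒴₁ 𝒴₂ 𝒮₁ 𝒮₂ : Type*} [MeasurableSpace Ω] [MeasurableSpace 𝒴₁] [MeasurableSpace 𝒴₂]
  [MeasurableSpace 𝒮₁] [MeasurableSpace 𝒮₂] {μ : Measure Ω} {μ₁ : Measure 𝒴₁} {μ₂ : Measure 𝒴₂}
  [SFinite μ₁] [SFinite μ₂] {Y₁ : Ω → 𝒴₁} {Y₂ : Ω → 𝒴₂} {T₁ : 𝒴₁ → 𝒮₁} {T₂ : 𝒴₂ → 𝒮₂}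
  {a : 𝒴₁ → ℝ≥0∞} {b : 𝒴₂ → ℝ≥0∞} {c : 𝒮₁ × 𝒮₂ → ℝ≥0∞}

lemma isCondExpFun_mul_of_map_eq_withDensity (hY₁ : Measurable Y₁) (hY₂ : Measurable Y₂)
    (hT₁ : Measurable T₁) (hT₂ : Measurable T₂) (ha : Measurable a) (hb : Measurable b)
    (hc : Measurable c)
    (hdens : μ.map (fun ω => (Y₁ ω, Y₂ ω))
      = (μ₁.prod μ₂).withDensity fun y => a y.1 * b y.2 * c (T₁ y.1, T₂ y.2))
    {u₁ : 𝒴₁ → ℝ≥0∞} {u₂ : 𝒴₂ → ℝ≥0∞} (hu₁ : Measurable u₁) (hu₂ : Measurable u₂)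
    (hfin₁ : ∫⁻ ω, u₁ (Y₁ ω) ∂μ ≠ ∞) (hfin₂ : ∫⁻ ω, u₂ (Y₂ ω) ∂μ ≠ ∞)
    {F₁ : 𝒮₁ → ℝ≥0∞} {F₂ : 𝒮₂ → ℝ≥0∞} (hF₁ : Measurable F₁) (hF₂ : Measurable F₂)
    (h₁ : IsCondExpFun μ (fun ω => T₁ (Y₁ ω)) (fun ω => u₁ (Y₁ ω)) F₁)
    (h₂ : IsCondExpFun μ (fun ω => T₂ (Y₂ ω)) (fun ω => u₂ (Y₂ ω)) F₂) :
    IsCondExpFun μ (fun ω => (T₁ (Y₁ ω), T₂ (Y₂ ω))) (fun ω => u₁ (Y₁ ω) * u₂ (Y₂ ω))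
      fun s => F₁ s.1 * F₂ s.2 := by
  have hdens₁ : μ.map (fun ω => (Y₁ ω, Y₂ ω))
      = (μ₁.prod μ₂).withDensity fun y => a y.1 * (b y.2 * c (T₁ y.1, T₂ y.2)) := by
    simp_rw [hdens, mul_assoc]
  have hdens₂ : μ.map (fun ω => (Y₂ ω, Y₁ ω))
      = (μ₂.prod μ₁).withDensity fun y => b y.1 * (a y.2 * c (T₁ y.2, T₂ y.1)) := by
    rw [show (fun ω => (Y₂ ω, Y₁ ω)) = Prod.swap ∘ fun ω => (Y₁ ω, Y₂ ω) from rfl,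
      ← Measure.map_map measurable_swap (hY₁.prodMk hY₂), hdens,
      map_swap_withDensity_prod (by fun_prop)]
    congr 1
    funext y
    simp only [Function.comp_apply, Prod.fst_swap, Prod.snd_swap]
    ring
  have h₁' := h₁.prodMk_of_map_eq_withDensity (B := fun q => b q.2 * c (q.1, T₂ q.2))
    hY₁ hY₂ hT₁ ha (by fun_prop) hdens₁ hu₁ hfin₁ hF₁
  have h₂' := h₂.prodMk_of_map_eq_withDensity (B := fun q => a q.2 * c (T₁ q.2, q.1))
    hY₂ hY₁ hT₂ hb (by fun_prop) hdens₂ hu₂ hfin₂ hF₂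
  intro W hW
  calc ∫⁻ ω, u₁ (Y₁ ω) * u₂ (Y₂ ω) * W (T₁ (Y₁ ω), T₂ (Y₂ ω)) ∂μ
      = ∫⁻ ω, u₁ (Y₁ ω) * (u₂ (Y₂ ω) * W (T₁ (Y₁ ω), T₂ (Y₂ ω))) ∂μ := by simp_rw [mul_assoc]
    _ = ∫⁻ ω, F₁ (T₁ (Y₁ ω)) * (u₂ (Y₂ ω) * W (T₁ (Y₁ ω), T₂ (Y₂ ω))) ∂μ :=
        h₁' (fun q => u₂ q.2 * W (q.1, T₂ q.2)) (by fun_prop)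
    _ = ∫⁻ ω, u₂ (Y₂ ω) * (F₁ (T₁ (Y₁ ω)) * W (T₁ (Y₁ ω), T₂ (Y₂ ω))) ∂μ :=
        lintegral_congr fun ω => by ring
    _ = ∫⁻ ω, F₂ (T₂ (Y₂ ω)) * (F₁ (T₁ (Y₁ ω)) * W (T₁ (Y₁ ω), T₂ (Y₂ ω))) ∂μ :=
        h₂' (fun q => F₁ (T₁ q.2) * W (T₁ q.2, q.1)) (by fun_prop)
    _ = _ := lintegral_congr fun ω => by ring

lemma condExp_mul_ae_eq_of_nonneg [IsFiniteMeasure μ] (hY₁ : Measurable Y₁)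
    (hY₂ : Measurable Y₂) (hT₁ : Measurable T₁) (hT₂ : Measurable T₂) (ha : Measurable a)
    (hb : Measurable b) (hc : Measurable c)
    (hdens : μ.map (fun ω => (Y₁ ω, Y₂ ω))
      = (μ₁.prod μ₂).withDensity fun y => a y.1 * b y.2 * c (T₁ y.1, T₂ y.2))
    {φ : 𝒴₁ → ℝ} {ψ : 𝒴₂ → ℝ} (hφ : Measurable φ) (hψ : Measurable ψ) (hφ0 : 0 ≤ φ)
    (hψ0 : 0 ≤ ψ) (hφL : MemLp (fun ω => φ (Y₁ ω)) ∞ μ) (hψL : MemLp (fun ω => ψ (Y₂ ω)) ∞ μ) :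
    μ[fun ω => φ (Y₁ ω) * ψ (Y₂ ω) |
        MeasurableSpace.comap (fun ω => (T₁ (Y₁ ω), T₂ (Y₂ ω))) inferInstance]
      =ᵐ[μ] fun ω =>
        (μ[fun ω' => φ (Y₁ ω') |
            MeasurableSpace.comap (fun ω => (T₁ (Y₁ ω), T₂ (Y₂ ω))) inferInstance]) ω *
        (μ[fun ω' => ψ (Y₂ ω') |
            MeasurableSpace.comap (fun ω => (T₁ (Y₁ ω), T₂ (Y₂ ω))) inferInstance]) ω := by
  have hS : Measurable fun ω => (T₁ (Y₁ ω), T₂ (Y₂ ω)) := by fun_prop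
  have hφi : Integrable (fun ω => φ (Y₁ ω)) μ := hφL.integrable le_top
  have hψi : Integrable (fun ω => ψ (Y₂ ω)) μ := hψL.integrable le_top
  obtain ⟨F₁, hF₁, h₁⟩ := exists_isCondExpFun μ (X := fun ω => T₁ (Y₁ ω)) (by fun_prop)
    (f := fun ω => ENNReal.ofReal (φ (Y₁ ω))) (by fun_prop)
  obtain ⟨F₂, hF₂, h₂⟩ := exists_isCondExpFun μ (X := fun ω => T₂ (Y₂ ω)) (by fun_prop)
    (f := fun ω => ENNReal.ofReal (ψ (Y₂ ω))) (by fun_prop)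
  have hu₁ : Measurable fun y => ENNReal.ofReal (φ y) := by fun_prop
  have hu₂ : Measurable fun y => ENNReal.ofReal (ψ y) := by fun_prop
  have hfin₁ := hφi.lintegral_lt_top.ne
  have hfin₂ := hψi.lintegral_lt_top.ne
  have hmul := isCondExpFun_mul_of_map_eq_withDensity hY₁ hY₂ hT₁ hT₂ ha hb hc hdens
    hu₁ hu₂ hfin₁ hfin₂ hF₁ hF₂ h₁ h₂
  have hmul₁ := isCondExpFun_mul_of_map_eq_withDensity hY₁ hY₂ hT₁ hT₂ ha hb hc hdens
    hu₁ measurable_one hfin₁ (by simp) hF₁ measurable_one h₁ fun _ _ => rfl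
  have hmul₂ := isCondExpFun_mul_of_map_eq_withDensity hY₁ hY₂ hT₁ hT₂ ha hb hc hdens
    measurable_one hu₂ (by simp) hfin₂ measurable_one hF₂ (fun _ _ => rfl) h₂
  simp only [Pi.one_apply, mul_one, one_mul, ← ENNReal.ofReal_mul (hφ0 _)] at hmul hmul₁ hmul₂
  filter_upwards [condExp_ae_eq_of_isCondExpFun hS (fun ω => mul_nonneg (hφ0 _) (hψ0 _))
      ((hψL.mul hφL).integrable le_top) (by fun_prop) hmul,
    condExp_ae_eq_of_isCondExpFun hS (fun ω => hφ0 _) hφi (by fun_prop) hmul₁,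
    condExp_ae_eq_of_isCondExpFun hS (fun ω => hψ0 _) hψi (by fun_prop) hmul₂] with ω e e₁ e₂
  rw [e, e₁, e₂, ENNReal.toReal_mul]

end FactoredDensity

/-- **Conditional independence from a factored joint density.**
If the joint law of `(Y₁, Y₂)` has density `a(y₁)·b(y₂)·c(T₁ y₁, T₂ y₂)` with respect
to a σ-finite product measure `μ₁ × μ₂`, then `Y₁` and `Y₂` are conditionally
independent given the pair `(T₁ (Y₁), T₂ (Y₂))`, in the sense that for all bounded
measurable `φ, ψ`,
`E[φ(Y₁)ψ(Y₂) | σ(T₁(Y₁), T₂(Y₂))] = E[φ(Y₁) | σ(...)]·E[ψ(Y₂) | σ(...)]` a.s. -/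
theorem condIndep_of_factored_density
    {Ω 𝒴₁ 𝒴₂ 𝒮₁ 𝒮₂ : Type} [MeasurableSpace Ω]
    [MeasurableSpace 𝒴₁] [MeasurableSpace 𝒴₂] [MeasurableSpace 𝒮₁] [MeasurableSpace 𝒮₂]
    (μ : Measure Ω) [IsProbabilityMeasure μ]
    (μ₁ : Measure 𝒴₁) (μ₂ : Measure 𝒴₂) [SigmaFinite μ₁] [SigmaFinite μ₂]
    (Y₁ : Ω → 𝒴₁) (Y₂ : Ω → 𝒴₂) (hY₁ : Measurable Y₁) (hY₂ : Measurable Y₂)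
    (T₁ : 𝒴₁ → 𝒮₁) (T₂ : 𝒴₂ → 𝒮₂) (hT₁ : Measurable T₁) (hT₂ : Measurable T₂)
    (a : 𝒴₁ → ℝ≥0∞) (b : 𝒴₂ → ℝ≥0∞) (c : 𝒮₁ × 𝒮₂ → ℝ≥0∞)
    (ha : Measurable a) (hb : Measurable b) (hc : Measurable c)
    (hdens : Measure.map (fun ω => (Y₁ ω, Y₂ ω)) μ
      = (μ₁.prod μ₂).withDensity fun y => a y.1 * b y.2 * c (T₁ y.1, T₂ y.2)) :
    ∀ (φ : 𝒴₁ → ℝ) (ψ : 𝒴₂ → ℝ), Measurable φ → Measurable ψ →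
      (∃ C, ∀ y, |φ y| ≤ C) → (∃ C, ∀ y, |ψ y| ≤ C) →
      μ[fun ω => φ (Y₁ ω) * ψ (Y₂ ω) |
          MeasurableSpace.comap (fun ω => (T₁ (Y₁ ω), T₂ (Y₂ ω))) inferInstance]
        =ᵐ[μ]
      fun ω =>
        (μ[fun ω' => φ (Y₁ ω') |
            MeasurableSpace.comap (fun ω => (T₁ (Y₁ ω), T₂ (Y₂ ω))) inferInstance]) ω *
        (μ[fun ω' => ψ (Y₂ ω') |
            MeasurableSpace.comap (fun ω => (T₁ (Y₁ ω), T₂ (Y₂ ω))) inferInstance]) ω := by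
  rintro φ ψ hφ hψ ⟨C₁, hC₁⟩ ⟨C₂, hC₂⟩
  have hφL : MemLp (fun ω => φ (Y₁ ω)) ∞ μ :=
    memLp_top_of_bound (hφ.comp hY₁).aestronglyMeasurable C₁ (ae_of_all _ fun ω => hC₁ (Y₁ ω))
  have hψL : MemLp (fun ω => ψ (Y₂ ω)) ∞ μ :=
    memLp_top_of_bound (hψ.comp hY₂).aestronglyMeasurable C₂ (ae_of_all _ fun ω => hC₂ (Y₂ ω))
  refine condExp_mul_ae_eq_of_add_const (by fun_prop : Measurable _).comap_le hφL hψL C₁ C₂ ?_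
  exact condExp_mul_ae_eq_of_nonneg hY₁ hY₂ hT₁ hT₂ ha hb hc hdens (φ := fun y => φ y + C₁)
    (ψ := fun y => ψ y + C₂) (by fun_prop) (by fun_prop)
    (fun y => show 0 ≤ φ y + C₁ by linarith [neg_le_abs (φ y), hC₁ y])
    (fun y => show 0 ≤ ψ y + C₂ by linarith [neg_le_abs (ψ y), hC₂ y])
    (hφL.add (memLp_top_const C₁)) (hψL.add (memLp_top_const C₂))
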